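/- Let τ > 0 and let z_i together with finitely many vectors indexed by nonempty finite disjoint sets P(i) and N(i) be unit vectors in ℝ^d, and let c_{i,m} ∈ [−1, 1] be given for every m ∈ N(i). Define L_i = −(1/|P(i)|) Σ_{p ∈ P(i)} log( exp(⟨z_i, z_p⟩/τ) / ( Σ_{k ∈ P(i)} exp(⟨z_i, z_k⟩/τ) + Σ_{m ∈ N(i)} exp(c_{i,m}/τ) ) ). Then L_i > log|N(i)| + (1/(τ·|N(i)|)) Σ_{m ∈ N(i)} c_{i,m} − 1/τ. -/
import Mathlib


open scoped RealInnerProductSpace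

/-- Jensen for exp: n * exp(avg) ≤ sum of exp. -/
lemma exp_avg_le {ι : Type*} (t : Finset ι) (ht : t.Nonempty) (f : ι → ℝ) :
    (t.card : ℝ) * Real.exp ((∑ m ∈ t, f m) / t.card) ≤ ∑ m ∈ t, Real.exp (f m) := by
  have hn : (0 : ℝ) < t.card := by exact_mod_cast ht.card_pos
  have h := convexOn_exp.map_sum_le (t := t) (w := fun _ => (t.card : ℝ)⁻¹)
      (p := f) (fun i _ => by positivity)
      (by rw [Finset.sum_const, nsmul_eq_mul, mul_inv_cancel₀ hn.ne'])
      (fun i _ => Set.mem_univ _)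
  simp only [smul_eq_mul, ← Finset.mul_sum] at h
  rw [div_eq_inv_mul]
  calc (t.card : ℝ) * Real.exp ((t.card : ℝ)⁻¹ * ∑ m ∈ t, f m)
      ≤ (t.card : ℝ) * ((t.card : ℝ)⁻¹ * ∑ m ∈ t, Real.exp (f m)) := by
        apply mul_le_mul_of_nonneg_left _ hn.le
        simpa [← Finset.mul_sum] using h
    _ = ∑ m ∈ t, Real.exp (f m) := by field_simp

/-- Per-anchor lower bound used in the proof of the lower bound of the
angle-compensated supervised contrastive loss: for an anchor unit vector `zi`,
unit vectors `z j` indexed by nonempty finite disjoint positive/negative sets `P`, `Nn`,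
and compensated cosines `c m ∈ [-1, 1]` for `m ∈ Nn`, the per-anchor loss `L_i`
is strictly greater than `log |Nn| + (1/(τ |Nn|)) ∑_{m ∈ Nn} c m - 1/τ`. -/
theorem accon_per_anchor_lower_bound
    {d : ℕ} (τ : ℝ) (hτ : 0 < τ) {ι : Type*} [DecidableEq ι]
    (P Nn : Finset ι) (hPne : P.Nonempty) (hNne : Nn.Nonempty)
    (hdisj : Disjoint P Nn)
    (zi : EuclideanSpace ℝ (Fin d)) (hzi : ‖zi‖ = 1)
    (z : ι → EuclideanSpace ℝ (Fin d)) (hz : ∀ j ∈ P ∪ Nn, ‖z j‖ = 1)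
    (c : ι → ℝ) (hc : ∀ m ∈ Nn, c m ∈ Set.Icc (-1 : ℝ) 1) :
    -(1 / (P.card : ℝ)) * ∑ p ∈ P,
        Real.log (Real.exp (⟪zi, z p⟫ / τ)
          / (∑ k ∈ P, Real.exp (⟪zi, z k⟫ / τ) + ∑ m ∈ Nn, Real.exp (c m / τ)))
      > Real.log (Nn.card : ℝ) + (1 / (τ * (Nn.card : ℝ))) * ∑ m ∈ Nn, c m - 1 / τ := by
  set SP := ∑ k ∈ P, Real.exp (⟪zi, z k⟫ / τ) with hSP
  set SN := ∑ m ∈ Nn, Real.exp (c m / τ) with hSN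
  have hPc : (0 : ℝ) < P.card := by exact_mod_cast hPne.card_pos
  have hNc : (0 : ℝ) < Nn.card := by exact_mod_cast hNne.card_pos
  have hSPpos : 0 < SP := Finset.sum_pos (fun k _ => Real.exp_pos _) hPne
  have hSNpos : 0 < SN := Finset.sum_pos (fun m _ => Real.exp_pos _) hNne
  have hSpos : 0 < SP + SN := by linarith
  -- rewrite LHS
  have hlog : ∀ p ∈ P, Real.log (Real.exp (⟪zi, z p⟫ / τ) / (SP + SN))
      = ⟪zi, z p⟫ / τ - Real.log (SP + SN) := by
    intro p _
    rw [Real.log_div (Real.exp_ne_zero _) hSpos.ne', Real.log_exp]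
  rw [Finset.sum_congr rfl hlog, Finset.sum_sub_distrib, Finset.sum_const, nsmul_eq_mul]
  have hLHS : -(1 / (P.card : ℝ)) * ((∑ p ∈ P, ⟪zi, z p⟫ / τ)
        - (P.card : ℝ) * Real.log (SP + SN))
      = Real.log (SP + SN) - (1 / (P.card : ℝ)) * ∑ p ∈ P, ⟪zi, z p⟫ / τ := by
    field_simp; ring
  rw [hLHS]
  -- bound the inner-product average
  have hip : (1 / (P.card : ℝ)) * (∑ p ∈ P, ⟪zi, z p⟫ / τ) ≤ 1 / τ := by
    have hsum : ∑ p ∈ P, ⟪zi, z p⟫ / τ ≤ (P.card : ℝ) * (1 / τ) := by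
      have := Finset.sum_le_card_nsmul P (fun p => ⟪zi, z p⟫ / τ) (1 / τ) ?_
      · simpa [nsmul_eq_mul] using this
      · intro p hp
        have hip1 : ⟪zi, z p⟫ ≤ 1 := by
          have := real_inner_le_norm zi (z p)
          rw [hzi, hz p (Finset.mem_union_left _ hp)] at this
          linarith
        exact div_le_div_of_nonneg_right hip1 hτ.le |>.trans_eq rfl
    calc (1 / (P.card : ℝ)) * (∑ p ∈ P, ⟪zi, z p⟫ / τ)
        ≤ (1 / (P.card : ℝ)) * ((P.card : ℝ) * (1 / τ)) := by
          apply mul_le_mul_of_nonneg_left hsum (by positivity)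
      _ = 1 / τ := by field_simp
  -- bound log (SP + SN)
  have hjensen : (Nn.card : ℝ) * Real.exp ((∑ m ∈ Nn, c m / τ) / Nn.card) ≤ SN :=
    exp_avg_le Nn hNne (fun m => c m / τ)
  have hlogSN : Real.log (Nn.card : ℝ) + (1 / (τ * (Nn.card : ℝ))) * ∑ m ∈ Nn, c m
      ≤ Real.log SN := by
    have h1 : Real.log ((Nn.card : ℝ) * Real.exp ((∑ m ∈ Nn, c m / τ) / Nn.card))
        ≤ Real.log SN := Real.log_le_log (by positivity) hjensen
    rw [Real.log_mul hNc.ne' (Real.exp_ne_zero _), Real.log_exp] at h1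
    have : (∑ m ∈ Nn, c m / τ) / (Nn.card : ℝ)
        = (1 / (τ * (Nn.card : ℝ))) * ∑ m ∈ Nn, c m := by
      rw [← Finset.sum_div, div_div, one_div, inv_mul_eq_div]
    linarith [this ▸ h1]
  have hlogS : Real.log SN < Real.log (SP + SN) :=
    Real.log_lt_log hSNpos (by linarith)
  linarith
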